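/- For every Υ ∈ Nor_n, γ̃(Υ) = θ(Υ)θ(x_1), where x_1 is the leftmost leaf of Υ: that is, the Stirling permutation γ̃(Υ) is obtained by listing the values θ(x) over all 2n−1 nodes x of Υ in postorder and appending the label of the leftmost leaf. -/
import Mathlib


/-! Colored labeled binary trees.  Leaf labels are positive integers; colors are
natural numbers (the paper's color set ℙ = {1,2,…} is identified with ℕ via j ↦ j-1,
i.e. color index `i : ℕ` represents the paper's color `i+1`). -/

inductive CTree : Type
  | leaf (label : ℕ) : CTree
  | node (color : ℕ) (l r : CTree) : CTree
deriving DecidableEq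

namespace CTree

/-- leaf labels from left to right -/
def leavesList : CTree → List ℕ
  | leaf m => [m]
  | node _ l r => leavesList l ++ leavesList r

/-- the valency `v(x)`: smallest leaf label of the subtree -/
def minLeaf : CTree → ℕ
  | leaf m => m
  | node _ l r => min (minLeaf l) (minLeaf r)

/-- a tree is normalized if in every subtree the leftmost leaf carries the
smallest leaf label of the subtree. -/
def Normalized : CTree → Prop
  | leaf _ => True
  | node _ l r => Normalized l ∧ Normalized r ∧ minLeaf l < minLeaf r

/-- number of internal nodes with color `j` -/
def colorCount : CTree → ℕ → ℕ
  | leaf _, _ => 0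
  | node c l r, j => (if c = j then 1 else 0) + colorCount l j + colorCount r j

def isLeafB : CTree → Bool
  | leaf _ => true
  | node _ _ _ => false

def left : CTree → CTree
  | leaf m => leaf m
  | node _ l _ => l

def right : CTree → CTree
  | leaf m => leaf m
  | node _ _ r => r

def rootColor : CTree → ℕ
  | leaf _ => 0
  | node c _ _ => c

/-- the root of `T` is a Lyndon node: either the left child is a leaf
or `v(R(L(x))) > v(R(x))`. (Leaves count as Lyndon.) -/
def RootLyndonB (T : CTree) : Bool :=
  isLeafB T || isLeafB (left T) || decide (minLeaf (right T) < minLeaf (right (left T)))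

/-- colored Lyndon condition: every internal node that is not a Lyndon node
satisfies `color(L(x)) > color(x)` -/
def LynColored : CTree → Prop
  | leaf _ => True
  | node c l r => LynColored l ∧ LynColored r ∧
      (RootLyndonB (node c l r) = true ∨ c < rootColor l)

/-- colored comb condition: every internal node whose right child is internal
satisfies `color(x) > color(R(x))` -/
def CombColored : CTree → Prop
  | leaf _ => True
  | node c l r => CombColored l ∧ CombColored r ∧ (isLeafB r = true ∨ rootColor r < c)

/-- all colors equal to `0`: an (essentially) uncolored tree. -/
def Mono : CTree → Prop
  | leaf _ => True
  | node c l r => c = 0 ∧ Mono l ∧ Mono r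

/-- the tree has leaf label set `[n] = {1,…,n}` (each label once) -/
def OnSet (n : ℕ) (T : CTree) : Prop := T.leavesList.Perm ((List.range n).map (· + 1))

/-- `lynAux T = (b, m)`: `b` is the size of the block of `π^{Lyn}` containing the
root (`0` for a leaf) and `m` is the multiset of sizes of the other blocks. -/
def lynAux : CTree → ℕ × Multiset ℕ
  | leaf _ => (0, 0)
  | node c l r =>
    let bl := (lynAux l).1
    let ml := (lynAux l).2
    let br := (lynAux r).1
    let mr := (lynAux r).2
    let closedR := mr + (if br = 0 then 0 else {br})
    if RootLyndonB (node c l r) then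
      (1, ml + (if bl = 0 then 0 else {bl}) + closedR)
    else (1 + bl, ml + closedR)

/-- the Lyndon type `λ^{Lyn}`: multiset of block sizes of `π^{Lyn}` -/
def lynType (T : CTree) : Multiset ℕ :=
  (if (lynAux T).1 = 0 then (0 : Multiset ℕ) else {(lynAux T).1}) + (lynAux T).2

def combAux : CTree → ℕ × Multiset ℕ
  | leaf _ => (0, 0)
  | node _ l r =>
    let bl := (combAux l).1
    let ml := (combAux l).2
    let br := (combAux r).1
    let mr := (combAux r).2
    (1 + br, ml + mr + (if bl = 0 then 0 else {bl}))

/-- the comb type `λ^{Comb}`: multiset of block sizes of `π^{Comb}` -/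
def combType (T : CTree) : Multiset ℕ :=
  (if (combAux T).1 = 0 then (0 : Multiset ℕ) else {(combAux T).1}) + (combAux T).2

/-- subtrees (= nodes) of a tree -/
def subtreesC : CTree → List CTree
  | leaf m => [leaf m]
  | node c l r => node c l r :: (subtreesC l ++ subtreesC r)

end CTree

/-- normalized uncolored labeled binary trees on `[n]`: the set `Nor_n`. -/
def NorSet (n : ℕ) : Set CTree :=
  {T | T.OnSet n ∧ T.Normalized ∧ T.Mono}

/-- `Lyn_μ` for a weak composition `μ` (indexed by ℕ; `μ i` is the number of
internal nodes of color `i`). -/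
def LynSet (n : ℕ) (μ : ℕ →₀ ℕ) : Set CTree :=
  {T | T.OnSet n ∧ T.Normalized ∧ T.LynColored ∧ ∀ j, T.colorCount j = μ j}

/-- `Comb_μ` -/
def CombSet (n : ℕ) (μ : ℕ →₀ ℕ) : Set CTree :=
  {T | T.OnSet n ∧ T.Normalized ∧ T.CombColored ∧ ∀ j, T.colorCount j = μ j}

/-- `Lyn_μ` for `μ ∈ wcomp` with support in `[k]`, given as `f : Fin k → ℕ`. -/
def LynSetF (n k : ℕ) (f : Fin k → ℕ) : Set CTree :=
  {T | T.OnSet n ∧ T.Normalized ∧ T.LynColored ∧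
    ∀ j : ℕ, T.colorCount j = if h : j < k then f ⟨j, h⟩ else 0}

def CombSetF (n k : ℕ) (f : Fin k → ℕ) : Set CTree :=
  {T | T.OnSet n ∧ T.Normalized ∧ T.CombColored ∧
    ∀ j : ℕ, T.colorCount j = if h : j < k then f ⟨j, h⟩ else 0}

namespace CTree

/-- the map `γ̃ : Nor_A → Q̂_A` (recursive definition). -/
def gammaT : CTree → List ℕ
  | leaf m => [m, m]
  | node _ l r => (gammaT l).dropLast ++ gammaT r ++ [minLeaf l]

/-- the extended labeling `θ` read in postorder over all nodes of the tree:
a leaf contributes its label, and an internal node contributes the smallest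
leaf label of its right subtree. -/
def thetaList : CTree → List ℕ
  | leaf m => [m]
  | node _ l r => thetaList l ++ thetaList r ++ [minLeaf r]

/-- the label `θ(x₁)` of the leftmost leaf -/
def leftLabel : CTree → ℕ
  | leaf m => m
  | node _ l _ => leftLabel l

end CTree

lemma leftLabel_eq_minLeaf : ∀ T : CTree, T.Normalized → CTree.leftLabel T = CTree.minLeaf T
  | CTree.leaf m, _ => rfl
  | CTree.node c l r, h => by
    obtain ⟨hl, hr, hlt⟩ := h
    simp [CTree.leftLabel, CTree.minLeaf, leftLabel_eq_minLeaf l hl, le_of_lt hlt]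

lemma gammaT_eq_of_normalized :
    ∀ T : CTree, T.Normalized → CTree.gammaT T = CTree.thetaList T ++ [CTree.leftLabel T]
  | CTree.leaf m, _ => rfl
  | CTree.node c l r, h => by
    obtain ⟨hl, hr, _⟩ := h
    have ihl := gammaT_eq_of_normalized l hl
    have ihr := gammaT_eq_of_normalized r hr
    simp [CTree.gammaT, CTree.thetaList, CTree.leftLabel, ihl, ihr,
      leftLabel_eq_minLeaf l hl, leftLabel_eq_minLeaf r hr]

/-- For every normalized tree `Υ ∈ Nor_n`, the Stirling permutation `γ̃(Υ)` is
obtained by listing the values `θ(x)` over all `2n-1` nodes of `Υ` in postorder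
and appending the label of the leftmost leaf. -/
theorem gammaT_eq_thetaList_append (n : ℕ) (hn : 1 ≤ n) :
    ∀ T ∈ NorSet n, CTree.gammaT T = CTree.thetaList T ++ [CTree.leftLabel T] := by
  intro T hT
  exact gammaT_eq_of_normalized T hT.2.1
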